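/- For all a, b > 0, the Dudley-type integral bound ∫₀^a √(log(1 + b/t)) dt ≤ a·√(log(e(1 + b/a))) holds. -/

import Mathlib

/-!
The function `f t = log (1 + b / t)` has the explicit primitive
`(t + b) log (t + b) - t log t`, so `∫₀^a f = a log (1 + b / a) + b log (1 + a / b)`, and
`log (1 + a / b) ≤ a / b` bounds this by `a L` with `L = 1 + log (1 + b / a)`.
Bounding `√` by its tangent line at `L`, `√x ≤ (x + L) / (2 √L)`, and integrating then gives
`∫₀^a √f ≤ (a L + a L) / (2 √L) = a √L`.
-/

open Real Set MeasureTheory intervalIntegral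

theorem Real.sqrt_le_add_div_two_mul_sqrt {x L : ℝ} (hx : 0 ≤ x) (hL : 0 < L) :
    √x ≤ (x + L) / (2 * √L) := by
  rw [le_div_iff₀ (by positivity)]
  nlinarith [sq_nonneg (√x - √L), sq_sqrt hx, sq_sqrt hL.le]

theorem intervalIntegral.integral_sqrt_le_of_integral_le {f : ℝ → ℝ} {a b L : ℝ} (hab : a ≤ b)
    (hL : 0 < L) (hf : IntervalIntegrable f volume a b) (hf₀ : ∀ x ∈ Ioc a b, 0 ≤ f x)
    (hfL : ∫ x in a..b, f x ≤ (b - a) * L) :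
    ∫ x in a..b, √(f x) ≤ (b - a) * √L := by
  set g : ℝ → ℝ := fun x ↦ (f x + L) / (2 * √L)
  have hg : IntervalIntegrable g volume a b := (hf.add intervalIntegrable_const).div_const _
  have hsqrt_le : ∀ x ∈ Ioc a b, √(f x) ≤ g x := fun x hx ↦
    sqrt_le_add_div_two_mul_sqrt (hf₀ x hx) hL
  have hsqrt : IntervalIntegrable (fun x ↦ √(f x)) volume a b := by
    refine hg.mono_fun' (continuous_sqrt.comp_aestronglyMeasurable hf.def'.aestronglyMeasurable) ?_
    rw [uIoc_of_le hab]
    filter_upwards [ae_restrict_mem measurableSet_Ioc] with x hx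
    rw [norm_of_nonneg (sqrt_nonneg _)]
    exact hsqrt_le x hx
  calc ∫ x in a..b, √(f x)
      ≤ ∫ x in a..b, g x :=
        integral_mono_on_of_le_Ioo hab hsqrt hg fun x hx ↦ hsqrt_le x (Ioo_subset_Ioc_self hx)
    _ = ((∫ x in a..b, f x) + (b - a) * L) / (2 * √L) := by
        rw [intervalIntegral.integral_div, integral_add hf intervalIntegrable_const,
          integral_const, smul_eq_mul]
    _ ≤ ((b - a) * L + (b - a) * L) / (2 * √L) := by gcongr
    _ = (b - a) * √L := by
        rw [div_eq_iff (by positivity)]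
        linear_combination (-2 * (b - a)) * sq_sqrt hL.le

theorem hasDerivAt_add_mul_log_add_sub_mul_log {b t : ℝ} (ht : t ≠ 0) (htb : t + b ≠ 0) :
    HasDerivAt (fun t ↦ (t + b) * log (t + b) - t * log t) (log (1 + b / t)) t := by
  refine ((hasDerivAt_mul_log htb).comp_add_const t b |>.sub
    (hasDerivAt_mul_log ht)).congr_deriv ?_
  rw [one_add_div ht, log_div htb ht]
  ring

section LogOneAddDiv

variable {a b : ℝ}

theorem continuous_add_mul_log_add_sub_mul_log :
    Continuous fun t ↦ (t + b) * log (t + b) - t * log t :=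
  ((continuous_add_const b).mul_log).sub continuous_mul_log

theorem hasDerivAt_on_Ioo_add_mul_log_add_sub_mul_log (hb : 0 ≤ b) :
    ∀ x ∈ Ioo 0 a,
      HasDerivAt (fun t ↦ (t + b) * log (t + b) - t * log t) (log (1 + b / x)) x :=
  fun _ ht ↦ hasDerivAt_add_mul_log_add_sub_mul_log ht.1.ne' (add_pos_of_pos_of_nonneg ht.1 hb).ne'

theorem log_one_add_div_nonneg {t : ℝ} (hb : 0 ≤ b) (ht : 0 ≤ t) : 0 ≤ log (1 + b / t) :=
  log_nonneg (le_add_of_nonneg_right (by positivity))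

theorem intervalIntegrable_log_one_add_div (ha : 0 ≤ a) (hb : 0 ≤ b) :
    IntervalIntegrable (fun t ↦ log (1 + b / t)) volume 0 a :=
  (intervalIntegrable_iff_integrableOn_Ioc_of_le ha).2 <|
    integrableOn_deriv_of_nonneg continuous_add_mul_log_add_sub_mul_log.continuousOn
      (hasDerivAt_on_Ioo_add_mul_log_add_sub_mul_log hb)
      fun _ ht ↦ log_one_add_div_nonneg hb ht.1.le

theorem integral_log_one_add_div (ha : 0 ≤ a) (hb : 0 ≤ b) :
    ∫ t in (0 : ℝ)..a, log (1 + b / t) = (a + b) * log (a + b) - a * log a - b * log b := by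
  rw [integral_eq_sub_of_hasDerivAt_of_le ha
    continuous_add_mul_log_add_sub_mul_log.continuousOn
    (hasDerivAt_on_Ioo_add_mul_log_add_sub_mul_log hb) (intervalIntegrable_log_one_add_div ha hb)]
  simp

theorem integral_log_one_add_div_le (ha : 0 < a) (hb : 0 < b) :
    ∫ t in (0 : ℝ)..a, log (1 + b / t) ≤ a * (1 + log (1 + b / a)) := by
  have hsplit : (a + b) * log (a + b) - a * log a - b * log b
      = a * log (1 + b / a) + b * log (1 + a / b) := by
    rw [one_add_div ha.ne', one_add_div hb.ne', log_div (by positivity) ha.ne',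
      log_div (by positivity) hb.ne', add_comm b a]
    ring
  have hb_log : b * log (1 + a / b) ≤ a := by
    calc b * log (1 + a / b) ≤ b * (a / b) := by
          gcongr
          linarith [log_le_sub_one_of_pos (show 0 < 1 + a / b by positivity)]
      _ = a := mul_div_cancel₀ a hb.ne'
  rw [integral_log_one_add_div ha.le hb.le, hsplit]
  linarith

end LogOneAddDiv

/-- Dudley-type integral bound: for `a, b > 0`,
`∫₀^a √(log(1 + b/t)) dt ≤ a √(log(e(1 + b/a)))`. -/
theorem dudley_integral_bound (a b : ℝ) (ha : 0 < a) (hb : 0 < b) :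
    ∫ t in (0 : ℝ)..a, Real.sqrt (Real.log (1 + b / t))
      ≤ a * Real.sqrt (Real.log (Real.exp 1 * (1 + b / a))) := by
  have hL : log (exp 1 * (1 + b / a)) = 1 + log (1 + b / a) := by
    rw [log_mul (exp_ne_zero 1) (by positivity), log_exp]
  have hL_pos : 0 < 1 + log (1 + b / a) := by
    linarith [log_one_add_div_nonneg hb.le ha.le]
  rw [hL]
  simpa using integral_sqrt_le_of_integral_le ha.le hL_pos
    (intervalIntegrable_log_one_add_div ha.le hb.le)
    (fun t ht ↦ log_one_add_div_nonneg hb.le ht.1.le)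
    (by simpa using integral_log_one_add_div_le ha hb)
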